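/- Let $F_n$ be the free associative algebra over a field of characteristic zero generated by $x_1,\dots,x_n$, let $\mathfrak{f}_n \subset F_n$ be the free Lie algebra on the same generators, and let $\widehat{F}_n$, $\widehat{\mathfrak{f}}_n$ be their degree completions. If $X \in \widehat{F}_n$ is a group-like element (i.e., $X = 1 + (\text{terms of degree} > 0)$ and $\Delta(X) = X \otimes X$ for the completed coproduct in which each $x_i$ is primitive), then $\log(X) = \widehat{\mathrm{cbh}}_n(X)$, where $\widehat{\mathrm{cbh}}_n : \widehat{F}_n \to \widehat{\mathfrak{f}}_n$ is the completion of the linear map $\mathrm{cbh}_n$ defined by $\mathrm{cbh}_n(1) = 0$ and $\mathrm{cbh}_n(x_{i_1}\cdots x_{i_k}) = \mathrm{CBH}_k(x_{i_1},\dots,x_{i_k})$. -/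

import Mathlib

/-!
Common setup: a concrete model of the degree completion `F̂ₙ` of the free
associative algebra on `n` generators `x₁, …, xₙ` over a field `K` of
characteristic zero, as the space of formal (possibly infinite) `K`-linear
combinations of words in the letters `x₁, …, xₙ`, i.e. functions
`List (Fin n) → K` (the value at a word is its coefficient).  The product is
the (well-defined) convolution/concatenation product.  The free associative
algebra `Fₙ` sits inside as the finitely supported functions; the word `w`
corresponds to `delta w`, and `xᵢ = delta [i]`.
-/

noncomputable section

open Finset

namespace CBHPaper

/-- The degree completion `F̂ₙ` of the free associative algebra on `n`
generators over `K`: formal series of words, i.e. functions assigning to every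
word (a list over `Fin n`) its coefficient.  Addition and scalar
multiplication are pointwise (the `Pi` module structure). -/
abbrev Fhat (K : Type) (n : ℕ) : Type := List (Fin n) → K

variable {K : Type} [Field K] [CharZero K] {n : ℕ}

/-- The unit `1` of `F̂ₙ` (the empty word). -/
def oneF : Fhat K n := fun w => if w = [] then 1 else 0

/-- The word `w₀` (a product of generators), viewed as an element of `F̂ₙ`.
In particular `delta [i]` is the generator `xᵢ`. -/
def delta (w₀ : List (Fin n)) : Fhat K n := fun w => if w = w₀ then 1 else 0

/-- The (concatenation) product of `F̂ₙ`: the coefficient of a word `w` in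
`f * g` is the sum over all ways of splitting `w` as a concatenation `u ++ v`
of `f u * g v`. -/
def mulF (f g : Fhat K n) : Fhat K n :=
  fun w => ∑ i ∈ Finset.range (w.length + 1), f (w.take i) * g (w.drop i)

/-- Powers in `F̂ₙ`. -/
def powF (f : Fhat K n) : ℕ → Fhat K n
  | 0 => oneF
  | k + 1 => mulF f (powF f k)

/-- Ordered product of a finite list of elements of `F̂ₙ`. -/
def prodListF : List (Fhat K n) → Fhat K n
  | [] => oneF
  | f :: l => mulF f (prodListF l)

/-- The exponential series `exp f = ∑ₖ fᵏ/k!`; it is the genuine exponential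
when `f` has vanishing constant term (then the sum defining each coefficient
is finite, as accounted for by the truncation below). -/
def expF (f : Fhat K n) : Fhat K n :=
  fun w => ∑ k ∈ Finset.range (w.length + 1), (Nat.factorial k : K)⁻¹ * powF f k w

/-- The logarithm series `log X = ∑_{k ≥ 1} (-1)^{k+1} (X-1)ᵏ / k`; it is the
genuine logarithm (the inverse of `expF`) when `X` has constant term `1`. -/
def logF (X : Fhat K n) : Fhat K n :=
  fun w => ∑ k ∈ Finset.Icc 1 w.length,
    (-1 : K) ^ (k + 1) * (k : K)⁻¹ * powF (X - oneF) k w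

/-- `shuf w u v` is the number of ways of splitting the word `w` into a
subword equal to `u` and a complementary subword equal to `v`; these are the
structure constants of the coproduct `Δ` of `F̂ₙ` for which the generators are
primitive:  `Δ(w) = ∑_{S ⊆ positions of w} w|_S ⊗ w|_{Sᶜ}`. -/
def shuf : List (Fin n) → List (Fin n) → List (Fin n) → ℕ
  | [], u, v => if u = [] ∧ v = [] then 1 else 0
  | a :: w, u, v =>
      (match u with
        | b :: u' => if b = a then shuf w u' v else 0
        | [] => 0) +
      (match v with
        | b :: v' => if b = a then shuf w u v' else 0
        | [] => 0)

/-- The completed coproduct of `F̂ₙ` (for which the generators `xᵢ` are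
primitive), expressed coefficientwise: `coprodF X u v` is the coefficient of
`u ⊗ v` in `Δ(X)`.  Only words of length `|u| + |v|` contribute. -/
def coprodF (X : Fhat K n) (u v : List (Fin n)) : K :=
  ∑ c : Fin (u.length + v.length) → Fin n,
    (shuf (List.ofFn c) u v : K) * X (List.ofFn c)

/-- `X ∈ F̂ₙ` is group-like if `X = 1 + (higher degree)` and `Δ(X) = X ⊗ X`. -/
def IsGroupLike (X : Fhat K n) : Prop :=
  X [] = 1 ∧ ∀ u v, coprodF X u v = X u * X v

/-- The free Lie algebra `fₙ ⊆ Fₙ ⊆ F̂ₙ`: the smallest subspace containing the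
generators `xᵢ` and closed under the commutator bracket `[f,g] = fg - gf`. -/
inductive IsLieElem : Fhat K n → Prop
  | gen (i : Fin n) : IsLieElem (delta [i])
  | zero : IsLieElem 0
  | add {f g : Fhat K n} : IsLieElem f → IsLieElem g → IsLieElem (f + g)
  | smul (c : K) {f : Fhat K n} : IsLieElem f → IsLieElem (c • f)
  | lieBracket {f g : Fhat K n} : IsLieElem f → IsLieElem g →
      IsLieElem (mulF f g - mulF g f)

/-- The homogeneous component of degree `k` of an element of `F̂ₙ`. -/
def trunc (k : ℕ) (f : Fhat K n) : Fhat K n := fun w => if w.length = k then f w else 0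

/-- The completed free Lie algebra `f̂ₙ ⊆ F̂ₙ` (degree completion of `fₙ`):
every homogeneous component is a Lie element. -/
def IsLieElemHat (f : Fhat K n) : Prop := ∀ k, IsLieElem (trunc k f)

/-- `CBHₖ(x₁, …, xₖ)`: the multilinear part (the component of multidegree
`(1,…,1)`, i.e. the part supported on words of length `k` with pairwise
distinct letters) of `log (e^{x₁} ⋯ e^{xₖ})`, an element of `fₖ ⊆ F̂ₖ`. -/
def CBHuniv (K : Type) [Field K] [CharZero K] (k : ℕ) : Fhat K k :=
  fun w =>
    if w.length = k ∧ w.Nodup then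
      logF (prodListF (List.ofFn fun i : Fin k => expF (delta [i]))) w
    else 0

/-- The pushforward (substitution `yⱼ ↦ x_{φ(j)}`) along a map of generators
`φ : Fin k → Fin n`; it is the continuous algebra morphism `F̂ₖ → F̂ₙ` induced
by `φ`. -/
def pushF {k : ℕ} (φ : Fin k → Fin n) (f : Fhat K k) : Fhat K n :=
  fun v => ∑ u : Fin v.length → Fin k,
    if (List.ofFn u).map φ = v then f (List.ofFn u) else 0

/-- `CBH_k(x_{i₁}, …, x_{i_k})` for a word `w = (i₁, …, i_k)` over `Fin n`:
the image of the universal `CBHuniv k` under the substitution `yⱼ ↦ x_{iⱼ}`.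
This is `cbhₙ(x_{i₁} ⋯ x_{i_k})`. -/
def CBHword (w : List (Fin n)) : Fhat K n :=
  pushF w.get (CBHuniv K w.length)

/-- The completion `ĉbhₙ : F̂ₙ → f̂ₙ ⊆ F̂ₙ` of the linear map `cbhₙ` sending
the word `x_{i₁} ⋯ x_{i_k}` to `CBHₖ(x_{i₁}, …, x_{i_k})`:  writing
`X = ∑_w X(w)·w`, `ĉbhₙ(X) = ∑_w X(w)·CBHword w` (for each coefficient this
is a finite sum, since `CBHword w` is homogeneous of degree `|w|`). -/
def cbhHat (X : Fhat K n) : Fhat K n :=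
  fun v => ∑ c : Fin v.length → Fin n, X (List.ofFn c) * CBHword (List.ofFn c) v

/-- The symmetrized product `sym(z₁ ⊙ ⋯ ⊙ z_k) = (1/k!) ∑_σ z_{σ(1)} ⋯ z_{σ(k)}`.
As the `zᵢ` range over (completed) Lie elements, these elements span the image
of `Sᵏ` under the symmetrization map. -/
def symProd {k : ℕ} (z : Fin k → Fhat K n) : Fhat K n :=
  (Nat.factorial k : K)⁻¹ • ∑ σ : Equiv.Perm (Fin k), prodListF (List.ofFn (z ∘ σ))

end CBHPaper

/-! ### Auxiliary development for the proof -/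

namespace CBHPaper

set_option linter.unusedSectionVars false
set_option linter.deprecated false

section Wsum

variable {A : Type} [Fintype A] [DecidableEq A] {M : Type} [AddCommMonoid M]

/-- Sum of `f` over all words of length `m` in the alphabet `A`. -/
def wsum (m : ℕ) (f : List A → M) : M := ∑ c : Fin m → A, f (List.ofFn c)

lemma wsum_zero (f : List A → M) : wsum 0 f = f [] := by
  rw [wsum]
  rw [Fintype.sum_unique]
  rfl

lemma wsum_succ (m : ℕ) (f : List A → M) :
    wsum (m + 1) f = ∑ x : A, wsum m (fun l => f (x :: l)) := by
  rw [wsum]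
  rw [← (Fin.consEquiv (fun _ => A)).sum_comp]
  rw [Fintype.sum_prod_type]
  refine Finset.sum_congr rfl fun x _ => Finset.sum_congr rfl fun c _ => ?_
  simp [Fin.consEquiv, List.ofFn_succ, Fin.cons]

lemma wsum_congr (m : ℕ) {f g : List A → M} (h : ∀ l : List A, l.length = m → f l = g l) :
    wsum m f = wsum m g :=
  Finset.sum_congr rfl fun c _ => h _ (List.length_ofFn (f := c))

lemma wsum_cast {m m' : ℕ} (h : m = m') (f : List A → M) : wsum m f = wsum m' f := by subst h; rfl

lemma wsum_zero_fun (m : ℕ) : wsum m (fun _ : List A => (0 : M)) = 0 := Finset.sum_const_zero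

lemma wsum_split (i : ℕ) {m : ℕ} (him : i ≤ m) (H : List A → List A → M) :
    wsum m (fun l => H (l.take i) (l.drop i)) =
      wsum i (fun a => wsum (m - i) (fun b => H a b)) := by
  induction i generalizing m H with
  | zero => simp [wsum_zero]
  | succ i ih =>
      obtain ⟨m', rfl⟩ : ∃ m', m = m' + 1 := ⟨m - 1, by omega⟩
      rw [wsum_succ, wsum_succ]
      refine Finset.sum_congr rfl fun x _ => ?_
      have : ∀ l : List A, (x :: l).take (i+1) = x :: l.take i := fun l => rfl
      simp only [this, List.drop_succ_cons]
      rw [ih (by omega) (fun a b => H (x :: a) b)]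
      rw [Nat.succ_sub_succ]

lemma wsum_collapse (m : ℕ) (L : List A) (g : List A → M) :
    wsum m (fun l => if l = L then g l else 0) =
      if L.length = m then g L else 0 := by
  by_cases h : L.length = m
  · rw [if_pos h]
    subst h
    rw [wsum]
    rw [Finset.sum_eq_single (fun i : Fin L.length => L.get i)]
    · simp [List.ofFn_get]
    · intro c _ hc
      have : List.ofFn c ≠ L := by
        intro hofn
        exact hc (List.ofFn_injective (by rw [hofn, List.ofFn_get]))
      simp [this]
    · intro h; exact absurd (Finset.mem_univ _) h
  · rw [if_neg h]
    refine Finset.sum_eq_zero fun c _ => ?_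
    have : List.ofFn c ≠ L := fun hc => h (by rw [← hc]; simp)
    simp [this]

lemma wsum_sum {ι : Type*} (s : Finset ι) (m : ℕ) (F : ι → List A → M) :
    wsum m (fun l => ∑ j ∈ s, F j l) = ∑ j ∈ s, wsum m (F j) :=
  Finset.sum_comm

end Wsum

section Wsum2
variable {A : Type} [Fintype A] [DecidableEq A] {M : Type} [AddCommMonoid M]

lemma wsum_eq_zero {m : ℕ} {f : List A → M} (h : ∀ l : List A, l.length = m → f l = 0) :
    wsum m f = 0 :=
  Finset.sum_eq_zero fun c _ => h _ (List.length_ofFn (f := c))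

lemma wsum_add (m : ℕ) (f g : List A → M) :
    wsum m (fun l => f l + g l) = wsum m f + wsum m g := Finset.sum_add_distrib

lemma wsum_mul_left {R : Type} [NonUnitalNonAssocSemiring R] (m : ℕ) (c : R) (f : List A → R) :
    wsum m (fun l => c * f l) = c * wsum m f := by rw [wsum, wsum, Finset.mul_sum]

lemma wsum_mul_right {R : Type} [NonUnitalNonAssocSemiring R] (m : ℕ) (c : R) (f : List A → R) :
    wsum m (fun l => f l * c) = wsum m f * c := by rw [wsum, wsum, Finset.sum_mul]

end Wsum2

lemma wsum_comm {A : Type} [Fintype A] [DecidableEq A] {A' : Type} [Fintype A'] [DecidableEq A']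
    {M : Type} [AddCommMonoid M] (m m' : ℕ) (F : List A → List A' → M) :
    wsum m (fun a => wsum m' (fun b => F a b)) = wsum m' (fun b => wsum m (fun a => F a b)) :=
  Finset.sum_comm

lemma wsum_natCast {A : Type} [Fintype A] [DecidableEq A] {R : Type} [Semiring R]
    (m : ℕ) (f : List A → ℕ) : ((wsum m f : ℕ) : R) = wsum m (fun l => (f l : R)) :=
  Nat.cast_sum _ _

variable {n k : ℕ}

@[simp] lemma shuf_nil (u v : List (Fin n)) :
    shuf ([] : List (Fin n)) u v = if u = [] ∧ v = [] then 1 else 0 := rfl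

@[simp] lemma shuf_cons_nil_nil (a : Fin n) (w : List (Fin n)) :
    shuf (a :: w) [] [] = 0 := rfl

@[simp] lemma shuf_cons_cons_nil (a b : Fin n) (w u' : List (Fin n)) :
    shuf (a :: w) (b :: u') [] = if b = a then shuf w u' [] else 0 := by
  show _ + 0 = _; rw [add_zero]

@[simp] lemma shuf_cons_nil_cons (a b : Fin n) (w v' : List (Fin n)) :
    shuf (a :: w) [] (b :: v') = if b = a then shuf w [] v' else 0 := by
  show 0 + _ = _; rw [zero_add]

@[simp] lemma shuf_cons_cons_cons (a b c : Fin n) (w u' v' : List (Fin n)) :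
    shuf (a :: w) (b :: u') (c :: v') =
      (if b = a then shuf w u' (c :: v') else 0) + (if c = a then shuf w (b :: u') v' else 0) := rfl

/-- Pushforward of an `ℕ`-valued coefficient function along `φ : Fin k → Fin n`. -/
def pushN (φ : Fin k → Fin n) (g : List (Fin k) → ℕ) (a : List (Fin n)) : ℕ :=
  wsum a.length (fun p => if p.map φ = a then g p else 0)

lemma pushN_nil (φ : Fin k → Fin n) (g : List (Fin k) → ℕ) : pushN φ g [] = g [] := by
  rw [pushN, List.length_nil, wsum_zero]; simp

lemma pushN_cons (φ : Fin k → Fin n) (g : List (Fin k) → ℕ) (h : Fin n) (a : List (Fin n)) :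
    pushN φ g (h :: a) = ∑ y : Fin k, if φ y = h then pushN φ (fun p => g (y :: p)) a else 0 := by
  rw [pushN, List.length_cons, wsum_succ]
  refine Finset.sum_congr rfl fun y _ => ?_
  rw [pushN]
  by_cases hy : φ y = h
  · rw [if_pos hy]
    refine wsum_congr _ fun l _ => ?_
    simp [hy]
  · rw [if_neg hy]
    refine wsum_eq_zero fun l _ => ?_
    simp [hy]

lemma pushN_congr (φ : Fin k → Fin n) {g g' : List (Fin k) → ℕ} (a : List (Fin n))
    (h : ∀ p : List (Fin k), p.length = a.length → g p = g' p) : pushN φ g a = pushN φ g' a := by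
  refine wsum_congr _ fun l hl => ?_
  rw [h l hl]

lemma pushN_zero (φ : Fin k → Fin n) (a : List (Fin n)) :
    pushN φ (fun _ => 0) a = 0 := by
  rw [pushN]
  exact wsum_eq_zero fun l _ => by simp

lemma pushN_add (φ : Fin k → Fin n) (g g' : List (Fin k) → ℕ) (a : List (Fin n)) :
    pushN φ (fun p => g p + g' p) a = pushN φ g a + pushN φ g' a := by
  rw [pushN, pushN, pushN, ← wsum_add]
  refine wsum_congr _ fun l _ => ?_
  by_cases hc : l.map φ = a <;> simp [hc]

lemma pushN_mul (φ : Fin k → Fin n) (c : ℕ) (g : List (Fin k) → ℕ) (a : List (Fin n)) :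
    pushN φ (fun p => c * g p) a = c * pushN φ g a := by
  rw [pushN, pushN, ← wsum_mul_left]
  refine wsum_congr _ fun l _ => ?_
  by_cases hp : l.map φ = a <;> simp [hp]

variable {n k : ℕ}

/-- Right-component auxiliary of the `shuf` recursion. -/
def hAux (x : Fin k) (g : List (Fin k) → ℕ) : List (Fin k) → ℕ
  | [] => 0
  | z :: q' => if z = x then g q' else 0

@[simp] lemma hAux_nil (x : Fin k) (g : List (Fin k) → ℕ) : hAux x g [] = 0 := rfl
@[simp] lemma hAux_cons (x : Fin k) (g : List (Fin k) → ℕ) (z : Fin k) (q : List (Fin k)) :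
    hAux x g (z :: q) = if z = x then g q else 0 := rfl

lemma shuf_cons_eq (x : Fin k) (t u v : List (Fin k)) :
    shuf (x :: t) u v =
      hAux x (fun u' => shuf t u' v) u + hAux x (fun v' => shuf t u v') v := by
  cases u <;> cases v <;> simp

lemma ite_add_zero' (P : Prop) [Decidable P] (A B : ℕ) :
    (if P then A + B else 0) = (if P then A else 0) + (if P then B else 0) := by
  by_cases h : P <;> simp [h]

lemma sum_collapse_x (φ : Fin k → Fin n) (x : Fin k) (h : Fin n) (F : Fin k → ℕ) :
    (∑ y : Fin k, if φ y = h then (if y = x then F y else 0) else 0)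
      = if φ x = h then F x else 0 := by
  rw [Finset.sum_eq_single x]
  · by_cases hx : φ x = h <;> simp [hx]
  · intro y _ hy
    by_cases h1 : φ y = h <;> simp [h1, hy]
  · intro hx; exact absurd (Finset.mem_univ _) hx

/-- Pushing the `hAux` component through `pushN`. -/
lemma pushN_hAux (φ : Fin k → Fin n) (x : Fin k) (g : List (Fin k) → ℕ) (b : List (Fin n)) :
    pushN φ (hAux x g) b =
      (match b with
        | [] => 0
        | hb :: b' => if hb = φ x then pushN φ g b' else 0) := by
  cases b with
  | nil => rw [pushN_nil]; rfl
  | cons hb b' =>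
      show _ = if hb = φ x then pushN φ g b' else 0
      rw [pushN_cons]
      have hz : ∀ z : Fin k, (pushN φ (fun q => hAux x g (z :: q)) b')
          = if z = x then pushN φ g b' else 0 := by
        intro z
        by_cases hzx : z = x
        · rw [if_pos hzx]
          exact pushN_congr _ _ fun p _ => by simp [hzx]
        · rw [if_neg hzx]
          rw [show (0:ℕ) = pushN φ (fun _ => 0) b' from (pushN_zero φ b').symm]
          exact pushN_congr _ _ fun p _ => by simp [hzx]
      simp only [hz]
      rw [sum_collapse_x φ x hb (fun _ => pushN φ g b')]
      by_cases hx : φ x = hb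
      · rw [if_pos hx, if_pos hx.symm]
      · rw [if_neg hx, if_neg (fun hh => hx hh.symm)]

lemma shuf_push (φ : Fin k → Fin n) :
    ∀ (t : List (Fin k)) (a b : List (Fin n)),
      shuf (t.map φ) a b = pushN φ (fun p => pushN φ (fun q => shuf t p q) b) a := by
  intro t
  induction t with
  | nil =>
      intro a b
      rw [List.map_nil]
      cases a with
      | nil =>
          rw [pushN_nil]
          cases b with
          | nil => rw [pushN_nil]; simp
          | cons hb b' =>
              rw [pushN_cons]
              have h0 : ∀ y : Fin k, pushN φ (fun q => shuf ([] : List (Fin k)) [] (y :: q)) b' = 0 := by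
                intro y
                rw [show (0:ℕ) = pushN φ (fun _ => 0) b' from (pushN_zero φ b').symm]
                exact pushN_congr _ _ fun p _ => by simp
              simp [h0, pushN_zero]
      | cons ha a' =>
          have inner0 : ∀ (y : Fin k) (p' : List (Fin k)),
              pushN φ (fun q => shuf ([] : List (Fin k)) (y :: p') q) b = 0 := by
            intro y p'
            rw [show (0:ℕ) = pushN φ (fun _ => 0) b from (pushN_zero φ b).symm]
            exact pushN_congr _ _ fun q _ => by simp
          rw [pushN_cons]
          have h0 : ∀ y : Fin k,
              pushN φ (fun p' => pushN φ (fun q => shuf ([] : List (Fin k)) (y :: p') q) b) a' = 0 := by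
            intro y
            rw [show (0:ℕ) = pushN φ (fun _ => 0) a' from (pushN_zero φ a').symm]
            exact pushN_congr _ _ fun p _ => inner0 y p
          simp [h0, pushN_zero]
  | cons x t ih =>
      intro a b
      rw [List.map_cons]
      cases a with
      | nil =>
          rw [pushN_nil]
          cases b with
          | nil => rw [pushN_nil]; rfl
          | cons hb b' =>
              rw [pushN_cons]
              have hz : ∀ z : Fin k, pushN φ (fun q => shuf (x :: t) [] (z :: q)) b'
                  = if z = x then pushN φ (fun q => shuf t [] q) b' else 0 := by
                intro z
                by_cases hzx : z = x
                · rw [if_pos hzx]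
                  exact pushN_congr _ _ fun q _ => by simp [hzx]
                · rw [if_neg hzx]
                  rw [show (0:ℕ) = pushN φ (fun _ => 0) b' from (pushN_zero φ b').symm]
                  exact pushN_congr _ _ fun q _ => by simp [hzx]
              simp only [hz]
              rw [sum_collapse_x φ x hb (fun _ => pushN φ (fun q => shuf t [] q) b')]
              rw [shuf_cons_nil_cons]
              have hih := ih [] b'
              rw [pushN_nil] at hih
              rw [hih]
              by_cases hx : φ x = hb
              · rw [if_pos hx, if_pos hx.symm]
              · rw [if_neg hx, if_neg (fun hh => hx hh.symm)]
      | cons ha a' =>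
          cases b with
          | nil =>
              rw [pushN_cons, shuf_cons_cons_nil]
              have hT : ∀ y : Fin k,
                  pushN φ (fun p' => pushN φ (fun q => shuf (x :: t) (y :: p') q) []) a'
                    = if y = x then pushN φ (fun p' => shuf t p' []) a' else 0 := by
                intro y
                have h1 : ∀ p' : List (Fin k),
                    pushN φ (fun q => shuf (x :: t) (y :: p') q) []
                      = if y = x then shuf t p' [] else 0 := by
                  intro p'; rw [pushN_nil, shuf_cons_cons_nil]
                by_cases hyx : y = x
                · rw [if_pos hyx]
                  refine pushN_congr _ _ fun p' _ => ?_
                  rw [h1 p', if_pos hyx]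
                · rw [if_neg hyx]
                  rw [show (0:ℕ) = pushN φ (fun _ => 0) a' from (pushN_zero φ a').symm]
                  refine pushN_congr _ _ fun p' _ => ?_
                  rw [h1 p', if_neg hyx]
              simp only [hT]
              rw [sum_collapse_x φ x ha (fun _ => pushN φ (fun p' => shuf t p' []) a')]
              have hih := ih a' []
              have he : pushN φ (fun p => pushN φ (fun q => shuf t p q) []) a'
                  = pushN φ (fun p' => shuf t p' []) a' :=
                pushN_congr _ _ fun p _ => by rw [pushN_nil]
              rw [he] at hih
              rw [hih]
              by_cases hx : φ x = ha
              · rw [if_pos hx, if_pos hx.symm]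
              · rw [if_neg hx, if_neg (fun hh => hx hh.symm)]
          | cons hb b' =>
              rw [pushN_cons, shuf_cons_cons_cons]
              have hT : ∀ y : Fin k,
                  pushN φ (fun p' => pushN φ (fun q => shuf (x :: t) (y :: p') q) (hb :: b')) a'
                    = (if y = x then pushN φ (fun p' => pushN φ (fun q => shuf t p' q) (hb :: b')) a' else 0)
                      + pushN φ (fun p' => if hb = φ x then pushN φ (fun q => shuf t (y :: p') q) b' else 0) a' := by
                intro y
                have h1 : ∀ p' : List (Fin k),
                    pushN φ (fun q => shuf (x :: t) (y :: p') q) (hb :: b')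
                      = (if y = x then pushN φ (fun q => shuf t p' q) (hb :: b') else 0)
                        + (if hb = φ x then pushN φ (fun q => shuf t (y :: p') q) b' else 0) := by
                  intro p'
                  have e1 : (fun q => shuf (x :: t) (y :: p') q)
                      = fun q => (if y = x then shuf t p' q else 0)
                          + hAux x (fun v' => shuf t (y :: p') v') q := by
                    funext q
                    rw [shuf_cons_eq x t (y :: p') q, hAux_cons]
                  rw [e1, pushN_add]
                  congr 1
                  · by_cases hyx : y = x
                    · rw [if_pos hyx]
                      exact pushN_congr _ _ fun q _ => by rw [if_pos hyx]
                    · rw [if_neg hyx]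
                      exact (pushN_congr φ _ fun q _ => if_neg hyx).trans (pushN_zero φ _)
                  · exact pushN_hAux φ x _ (hb :: b')
                have e2 : (fun p' => pushN φ (fun q => shuf (x :: t) (y :: p') q) (hb :: b'))
                    = fun p' => (if y = x then pushN φ (fun q => shuf t p' q) (hb :: b') else 0)
                        + (if hb = φ x then pushN φ (fun q => shuf t (y :: p') q) b' else 0) := by
                  funext p'; exact h1 p'
                rw [e2, pushN_add]
                congr 1
                by_cases hyx : y = x
                · rw [if_pos hyx]
                  exact pushN_congr _ _ fun p' _ => by rw [if_pos hyx]
                · rw [if_neg hyx]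
                  exact (pushN_congr φ _ fun p' _ => if_neg hyx).trans (pushN_zero φ _)
              simp only [hT]
              simp only [ite_add_zero']
              rw [Finset.sum_add_distrib]
              congr 1
              · rw [sum_collapse_x φ x ha
                    (fun _ => pushN φ (fun p' => pushN φ (fun q => shuf t p' q) (hb :: b')) a')]
                rw [ih a' (hb :: b')]
                by_cases hx : φ x = ha
                · rw [if_pos hx, if_pos hx.symm]
                · rw [if_neg hx, if_neg (fun hh => hx hh.symm)]
              · rw [← pushN_cons φ (fun p => if hb = φ x then pushN φ (fun q => shuf t p q) b' else 0) ha a']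
                by_cases hx : hb = φ x
                · rw [if_pos hx]
                  rw [ih (ha :: a') b']
                  exact pushN_congr _ _ fun p _ => by rw [if_pos hx]
                · rw [if_neg hx]
                  exact ((pushN_congr φ (ha :: a') fun p _ => if_neg hx).trans (pushN_zero φ _)).symm

variable {n k : ℕ}

/-- `Scount j w v` counts the ways of splitting the positions of `w` into `j`
(possibly interleaved) nonempty subwords whose concatenation is `v`. -/
def Scount : ℕ → List (Fin n) → List (Fin n) → ℕ
  | 0, w, v => if w = [] ∧ v = [] then 1 else 0
  | j+1, w, v => ∑ i ∈ Finset.Icc 1 v.length,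
      wsum (v.length - i) (fun u => shuf w (v.take i) u * Scount j u (v.drop i))

lemma Scount_push (φ : Fin k → Fin n) :
    ∀ (j : ℕ) (t : List (Fin k)) (v : List (Fin n)),
      Scount j (t.map φ) v = pushN φ (fun u => Scount j t u) v := by
  intro j
  induction j with
  | zero =>
      intro t v
      cases v with
      | nil =>
          rw [pushN_nil]
          show (if t.map φ = [] ∧ ([] : List (Fin n)) = [] then 1 else 0) = _
          simp [Scount, List.map_eq_nil_iff]
      | cons h v' =>
          show (if t.map φ = [] ∧ h :: v' = [] then 1 else 0) = _
          rw [if_neg (by simp)]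
          rw [pushN_cons]
          symm
          refine Finset.sum_eq_zero fun y _ => ?_
          have h0 : pushN φ (fun p => Scount 0 t (y :: p)) v' = 0 :=
            (pushN_congr φ _ fun p _ => by simp [Scount]).trans (pushN_zero φ _)
          simp [h0]
  | succ j ih =>
      intro t v
      set m := v.length with hm
      have hRHS : pushN φ (fun u => Scount (j+1) t u) v
          = ∑ i ∈ Finset.Icc 1 m, wsum m (fun c => if c.map φ = v then
              wsum (m - i) (fun q2 => shuf t (c.take i) q2 * Scount j q2 (c.drop i)) else 0) := by
        rw [pushN, ← hm]
        rw [← wsum_sum]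
        refine wsum_congr _ fun c hc => ?_
        by_cases h : c.map φ = v
        · rw [if_pos h]
          show Scount (j+1) t c = _
          simp only [Scount, hc, if_pos h]
        · rw [if_neg h]
          symm
          exact Finset.sum_eq_zero fun i _ => by rw [if_neg h]
      rw [hRHS]
      show (∑ i ∈ Finset.Icc 1 m, _) = _
      refine Finset.sum_congr rfl fun i hi => ?_
      obtain ⟨hi1, him⟩ := Finset.mem_Icc.mp hi
      -- rewrite the RHS summand
      have hsplit : ∀ c : List (Fin k), c.length = m →
          ((if c.map φ = v then
              wsum (m - i) (fun q2 => shuf t (c.take i) q2 * Scount j q2 (c.drop i)) else 0)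
            = (fun a q => if (a.map φ = v.take i ∧ q.map φ = v.drop i) then
                wsum (m - i) (fun q2 => shuf t a q2 * Scount j q2 q) else 0) (c.take i) (c.drop i)) := by
        intro c hc
        have hcond : (c.map φ = v) ↔ ((c.take i).map φ = v.take i ∧ (c.drop i).map φ = v.drop i) := by
          constructor
          · intro h
            constructor
            · rw [List.map_take, h]
            · rw [List.map_drop, h]
          · rintro ⟨h1, h2⟩
            calc c.map φ = (c.take i ++ c.drop i).map φ := by rw [List.take_append_drop]
              _ = (c.take i).map φ ++ (c.drop i).map φ := by rw [List.map_append]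
              _ = v.take i ++ v.drop i := by rw [h1, h2]
              _ = v := List.take_append_drop i v
        simp only [hcond]
      have hR : wsum m (fun c => if c.map φ = v then
              wsum (m - i) (fun q2 => shuf t (c.take i) q2 * Scount j q2 (c.drop i)) else 0)
          = wsum i (fun a => wsum (m - i) (fun q =>
              if (a.map φ = v.take i ∧ q.map φ = v.drop i) then
                wsum (m - i) (fun q2 => shuf t a q2 * Scount j q2 q) else 0)) := by
        refine (wsum_congr _ hsplit).trans ?_
        exact wsum_split i him (fun a q => if (a.map φ = v.take i ∧ q.map φ = v.drop i) then
                wsum (m - i) (fun q2 => shuf t a q2 * Scount j q2 q) else 0)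
      rw [hR]
      have hcommon : ∀ (a : List (Fin k)), a.length = i →
          wsum (m - i) (fun q => if (a.map φ = v.take i ∧ q.map φ = v.drop i) then
              wsum (m - i) (fun q2 => shuf t a q2 * Scount j q2 q) else 0)
          = if a.map φ = v.take i then
              wsum (m - i) (fun q2 => shuf t a q2 *
                wsum (m - i) (fun q => if q.map φ = v.drop i then Scount j q2 q else 0))
            else 0 := by
        intro a _
        by_cases ha : a.map φ = v.take i
        · rw [if_pos ha]
          have h1 : ∀ q : List (Fin k), q.length = m - i →
              ((if (a.map φ = v.take i ∧ q.map φ = v.drop i) then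
                wsum (m - i) (fun q2 => shuf t a q2 * Scount j q2 q) else 0)
              = wsum (m - i) (fun q2 => shuf t a q2 *
                  (if q.map φ = v.drop i then Scount j q2 q else 0))) := by
            intro q _
            by_cases hq : q.map φ = v.drop i
            · rw [if_pos (⟨ha, hq⟩ : _ ∧ _)]
              exact wsum_congr _ fun q2 _ => by rw [if_pos hq]
            · rw [if_neg (fun hh : _ ∧ _ => hq hh.2)]
              symm
              exact wsum_eq_zero fun q2 _ => by rw [if_neg hq, mul_zero]
          rw [wsum_congr _ h1, wsum_comm]
          refine wsum_congr _ fun q2 _ => ?_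
          rw [wsum_mul_left]
        · rw [if_neg ha]
          exact wsum_eq_zero fun q _ => by rw [if_neg (fun hh : _ ∧ _ => ha hh.1)]
      rw [wsum_congr _ hcommon]
      -- now the LHS summand
      have hL1 : ∀ u : List (Fin n), u.length = m - i →
          shuf (t.map φ) (v.take i) u * Scount j u (v.drop i)
          = wsum i (fun p => (if p.map φ = v.take i then
              wsum (m - i) (fun q2 => if q2.map φ = u then shuf t p q2 else 0) else 0)
                * Scount j u (v.drop i)) := by
        intro u hu
        rw [shuf_push φ t (v.take i) u]
        rw [wsum_mul_right]
        congr 1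
        show pushN φ _ _ = _
        rw [pushN]
        rw [wsum_cast (show (v.take i).length = i by rw [List.length_take]; omega)]
        refine wsum_congr _ fun p _ => ?_
        by_cases hp : p.map φ = v.take i
        · rw [if_pos hp, if_pos hp]
          show pushN φ _ _ = _
          rw [pushN, wsum_cast hu]
        · rw [if_neg hp, if_neg hp]
      rw [wsum_congr _ hL1, wsum_comm]
      refine wsum_congr _ fun p hp => ?_
      by_cases hptake : p.map φ = v.take i
      · rw [if_pos hptake]
        have h2 : ∀ u : List (Fin n), u.length = m - i →
            ((if p.map φ = v.take i then
                wsum (m - i) (fun q2 => if q2.map φ = u then shuf t p q2 else 0) else 0)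
              * Scount j u (v.drop i))
            = wsum (m - i) (fun q2 => if u = q2.map φ then shuf t p q2 * Scount j u (v.drop i) else 0) := by
          intro u _
          rw [if_pos hptake, ← wsum_mul_right]
          refine wsum_congr _ fun q2 _ => ?_
          by_cases hq2 : q2.map φ = u
          · rw [if_pos hq2, if_pos hq2.symm]
          · rw [if_neg hq2, if_neg (fun hh => hq2 hh.symm), zero_mul]
        rw [wsum_congr _ h2, wsum_comm]
        refine wsum_congr _ fun q2 hq2 => ?_
        have hcol := wsum_collapse (m - i) (q2.map φ)
          (fun u => shuf t p q2 * Scount j u (v.drop i))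
        rw [hcol, if_pos (by rw [List.length_map]; exact hq2)]
        rw [ih q2 (v.drop i)]
        show _ = shuf t p q2 * wsum (m - i) _
        rw [pushN, wsum_cast (show (v.drop i).length = m - i by rw [List.length_drop])]
      · rw [if_neg hptake]
        exact wsum_eq_zero fun u _ => by rw [if_neg hptake, zero_mul]

variable {K : Type} [Field K] [CharZero K] {n k : ℕ}

lemma range_succ_eq_insert (m : ℕ) : Finset.range (m + 1) = insert 0 (Finset.Icc 1 m) := by
  ext x; simp [Finset.mem_range, Finset.mem_Icc]; omega

lemma powF_succ (f : Fhat K n) (j : ℕ) : powF f (j + 1) = mulF f (powF f j) := rfl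

lemma coprodF_eq_wsum (X : Fhat K n) (u v : List (Fin n)) :
    coprodF X u v = wsum (u.length + v.length) (fun w => (shuf w u v : K) * X w) := rfl

lemma powF_grouplike (X : Fhat K n) (hX : IsGroupLike X) :
    ∀ (j : ℕ) (v : List (Fin n)),
      powF (X - oneF) j v = wsum v.length (fun w => X w * (Scount j w v : K)) := by
  intro j
  induction j with
  | zero =>
      intro v
      cases v with
      | nil =>
          show oneF [] = _
          rw [List.length_nil, wsum_zero]
          show (1 : K) = X [] * ((if ([] : List (Fin n)) = [] ∧ ([] : List (Fin n)) = [] then 1 else 0 : ℕ) : K)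
          rw [if_pos ⟨rfl, rfl⟩, hX.1, Nat.cast_one, one_mul]
      | cons h v' =>
          show oneF (h :: v') = _
          rw [show oneF (h :: v') = (0 : K) from if_neg (by simp)]
          symm
          refine wsum_eq_zero fun w _ => ?_
          show X w * ((if w = [] ∧ h :: v' = [] then 1 else 0 : ℕ) : K) = 0
          rw [if_neg (by simp), Nat.cast_zero, mul_zero]
  | succ j ih =>
      intro v
      set m := v.length with hm
      rw [powF_succ, mulF, ← hm, range_succ_eq_insert m, Finset.sum_insert (by simp)]
      have h0 : (X - oneF : Fhat K n) (v.take 0) = 0 := by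
        show X [] - oneF [] = 0
        rw [hX.1]; simp [oneF]
      rw [h0, zero_mul, zero_add]
      have hterm : ∀ i ∈ Finset.Icc 1 m,
          (X - oneF : Fhat K n) (v.take i) * powF (X - oneF) j (v.drop i)
            = wsum m (fun w => X w *
                wsum (m - i) (fun q => (shuf w (v.take i) q : K) * (Scount j q (v.drop i) : K))) := by
        intro i hi
        obtain ⟨hi1, him⟩ := Finset.mem_Icc.mp hi
        have htake : v.take i ≠ [] := by
          intro h
          have hlen := congrArg List.length h
          rw [List.length_take] at hlen
          simp only [List.length_nil] at hlen
          have hiv : i ≤ v.length := hm ▸ him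
          omega
        have hXf : (X - oneF : Fhat K n) (v.take i) = X (v.take i) := by
          show X (v.take i) - oneF (v.take i) = X (v.take i)
          rw [show oneF (v.take i) = (0:K) from if_neg htake, sub_zero]
        rw [hXf, ih (v.drop i)]
        rw [wsum_cast (show (v.drop i).length = m - i by rw [List.length_drop])]
        rw [← wsum_mul_left]
        have hpoint : ∀ q : List (Fin n), q.length = m - i →
            X (v.take i) * (X q * (Scount j q (v.drop i) : K))
              = wsum m (fun w => (X w * ((shuf w (v.take i) q : K) * (Scount j q (v.drop i) : K)))) := by
          intro q hq
          have hcop := (hX.2 (v.take i) q).symm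
          rw [coprodF_eq_wsum] at hcop
          rw [← mul_assoc, hcop]
          rw [wsum_cast (show (v.take i).length + q.length = m by
            rw [List.length_take, hq]; omega)]
          rw [← wsum_mul_right]
          refine wsum_congr _ fun w _ => ?_
          ring
        rw [wsum_congr _ hpoint, wsum_comm]
        refine wsum_congr _ fun w _ => ?_
        rw [wsum_mul_left]
      rw [Finset.sum_congr rfl hterm, ← wsum_sum]
      refine wsum_congr _ fun w _ => ?_
      rw [← Finset.mul_sum]
      congr 1
      show _ = ((Scount (j+1) w v : ℕ) : K)
      rw [show Scount (j+1) w v = ∑ i ∈ Finset.Icc 1 v.length,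
        wsum (v.length - i) (fun u => shuf w (v.take i) u * Scount j u (v.drop i)) from rfl]
      rw [Nat.cast_sum, ← hm]
      refine Finset.sum_congr rfl fun i _ => ?_
      rw [wsum_natCast]
      refine wsum_congr _ fun q _ => ?_
      rw [Nat.cast_mul]

/-- The Eulerian-idempotent coefficient: coefficient of the word `v` in `e₁(w)`. -/
def Ecoef (w v : List (Fin n)) : K :=
  ∑ j ∈ Finset.Icc 1 v.length, (-1 : K) ^ (j + 1) * (j : K)⁻¹ * (Scount j w v : K)

lemma logF_grouplike (X : Fhat K n) (hX : IsGroupLike X) (v : List (Fin n)) :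
    logF X v = wsum v.length (fun w => X w * Ecoef w v) := by
  show (∑ j ∈ Finset.Icc 1 v.length, _) = _
  have : ∀ j ∈ Finset.Icc 1 v.length,
      (-1 : K) ^ (j + 1) * (j : K)⁻¹ * powF (X - oneF) j v
        = wsum v.length (fun w => X w * ((-1 : K) ^ (j + 1) * (j : K)⁻¹ * (Scount j w v : K))) := by
    intro j _
    rw [powF_grouplike X hX j v, ← wsum_mul_left]
    refine wsum_congr _ fun w _ => ?_
    ring
  rw [Finset.sum_congr rfl this, ← wsum_sum]
  refine wsum_congr _ fun w _ => ?_
  rw [Ecoef, ← Finset.mul_sum]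

variable {K : Type} [Field K] [CharZero K] {n k : ℕ}

lemma mulF_nil (f g : Fhat K n) : mulF f g [] = f [] * g [] := by
  simp [mulF]

lemma mulF_delta (g : Fin n) (h : Fhat K n) (t : List (Fin n)) :
    mulF (delta [g]) h t =
      match t with | [] => 0 | a :: t' => if a = g then h t' else 0 := by
  cases t with
  | nil =>
      rw [mulF_nil]
      show delta [g] [] * h [] = 0
      rw [show delta [g] [] = (0:K) from if_neg (by simp), zero_mul]
  | cons a t' =>
      show mulF _ _ _ = if a = g then h t' else 0
      rw [mulF]
      rw [Finset.sum_eq_single 1]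
      · show delta [g] ((a :: t').take 1) * h ((a :: t').drop 1) = _
        by_cases hag : a = g <;> simp [delta, hag]
      · intro i hi hne
        have hz : (delta [g] : Fhat K n) ((a :: t').take i) = 0 := by
          rw [delta, if_neg]
          intro hEq
          have hlen := congrArg List.length hEq
          rw [List.length_take] at hlen
          simp at hlen hi
          omega
        rw [hz, zero_mul]
      · intro h1
        exact absurd (Finset.mem_range.mpr (by simp)) h1

lemma mulF_delta_nat_guard : True := trivial

lemma powF_delta (g : Fin n) :
    ∀ (m : ℕ) (t : List (Fin n)),
      powF (delta [g] : Fhat K n) m t = if t = List.replicate m g then 1 else 0 := by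
  intro m
  induction m with
  | zero =>
      intro t
      show oneF t = _
      cases t <;> simp [oneF]
  | succ m ih =>
      intro t
      rw [powF_succ, mulF_delta]
      cases t with
      | nil => simp [List.replicate_succ]
      | cons a t' =>
          show (if a = g then powF (delta [g] : Fhat K n) m t' else 0) = _
          rw [List.replicate_succ]
          by_cases hag : a = g
          · rw [if_pos hag, ih t']
            by_cases ht' : t' = List.replicate m g
            · rw [if_pos ht', if_pos (by rw [hag, ht'])]
            · rw [if_neg ht', if_neg (by intro hh; exact ht' (List.cons.injEq .. ▸ hh).2)]
          · rw [if_neg hag, if_neg (by intro hh; exact hag (List.cons.injEq .. ▸ hh).1)]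

lemma expF_delta (g : Fin n) (t : List (Fin n)) :
    expF (delta [g] : Fhat K n) t
      = if t = List.replicate t.length g then ((t.length.factorial : ℕ) : K)⁻¹ else 0 := by
  rw [expF]
  rw [Finset.sum_eq_single t.length]
  · rw [powF_delta]
    by_cases h : t = List.replicate t.length g
    · rw [if_pos h, if_pos h, mul_one]
    · rw [if_neg h, if_neg h, mul_zero]
  · intro m _ hne
    rw [powF_delta, if_neg, mul_zero]
    intro h
    have := congrArg List.length h
    rw [List.length_replicate] at this
    exact hne this.symm
  · intro h
    exact absurd (Finset.mem_range.mpr (by omega)) h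

lemma prodList_exp :
    ∀ (gs : List (Fin n)), gs.Nodup → ∀ (s : List (Fin n)), s.Nodup →
      prodListF (gs.map fun i => (expF (delta [i]) : Fhat K n)) s
        = if List.Sublist s gs then (1 : K) else 0 := by
  intro gs
  induction gs with
  | nil =>
      intro _ s _
      show oneF s = _
      rw [oneF]
      by_cases h : s = [] <;> simp [h]
  | cons g gs' ih =>
      intro hgs s hs
      obtain ⟨hgnot, hgs'⟩ := List.nodup_cons.mp hgs
      rw [List.map_cons]
      show mulF (expF (delta [g])) (prodListF (gs'.map fun i => expF (delta [i]))) s = _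
      cases s with
      | nil =>
          rw [mulF_nil]
          have h1 : expF (delta [g] : Fhat K n) [] = 1 := by
            rw [expF_delta]; simp
          rw [h1, one_mul, ih hgs' [] List.nodup_nil]
          simp
      | cons a s' =>
          obtain ⟨hanot, hs'⟩ := List.nodup_cons.mp hs
          rw [mulF]
          have hbig : ∀ i ∈ Finset.range ((a :: s').length + 1), i ≠ 0 → i ≠ 1 →
              expF (delta [g] : Fhat K n) ((a :: s').take i)
                * prodListF (gs'.map fun i => expF (delta [i])) ((a :: s').drop i) = 0 := by
            intro i hi h0 h1
            have hlen : ((a :: s').take i).length = i := by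
              rw [List.length_take]
              simp only [Finset.mem_range, List.length_cons] at hi
              simp only [List.length_cons]
              omega
            have hz : expF (delta [g] : Fhat K n) ((a :: s').take i) = 0 := by
              rw [expF_delta, if_neg]
              intro hEq
              have hnd : ((a :: s').take i).Nodup := hs.sublist (List.take_sublist i (a :: s'))
              rw [hEq, hlen] at hnd
              rw [List.nodup_replicate] at hnd
              omega
            rw [hz, zero_mul]
          rw [Finset.sum_range_succ']
          rw [Finset.sum_eq_single 0 (fun i hi hne =>
            hbig (i+1) (by simp only [Finset.mem_range, List.length_cons] at hi ⊢; omega)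
              (by omega) (by omega))
            (fun h => absurd (Finset.mem_range.mpr (by simp)) h)]
          have hA : expF (delta [g] : Fhat K n) [a] = if a = g then (1:K) else 0 := by
            rw [expF_delta]
            by_cases hag : a = g <;> simp [hag]
          have hB : expF (delta [g] : Fhat K n) [] = 1 := by
            rw [expF_delta]; simp
          simp only [List.take_succ_cons, List.take_zero, List.drop_succ_cons, List.drop_zero]
          rw [hA, hB, one_mul]
          rw [ih hgs' (a :: s') hs, ih hgs' s' hs']
          by_cases hag : a = g
          · subst hag
            have hnot : ¬(List.Sublist (a :: s') gs') := fun h => hgnot (h.subset (List.mem_cons_self))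
            rw [if_pos rfl, one_mul, if_neg hnot, add_zero]
            by_cases hsub : List.Sublist s' gs'
            · rw [if_pos hsub, if_pos (List.cons_sublist_cons.mpr hsub)]
            · rw [if_neg hsub, if_neg (fun h => hsub (List.cons_sublist_cons.mp h))]
          · rw [if_neg hag, zero_mul, zero_add]
            have hiff : List.Sublist (a :: s') (g :: gs') ↔ List.Sublist (a :: s') gs' := by
              constructor
              · intro h
                cases h with
                | cons _ h => exact h
                | cons_cons => exact absurd rfl hag
              · intro h; exact h.cons g
            by_cases hsub : List.Sublist (a :: s') gs'
            · rw [if_pos hsub, if_pos (hiff.mpr hsub)]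
            · rw [if_neg hsub, if_neg (fun h => hsub (hiff.mp h))]

/-- The universal group-like element `Y = e^{x₀} ⋯ e^{x_{k-1}} ∈ F̂ₖ`. -/
def Yuniv (K : Type) [Field K] [CharZero K] (k : ℕ) : Fhat K k :=
  prodListF (List.ofFn fun i : Fin k => expF (delta [i]))

lemma sublist_finRange_iff (s : List (Fin k)) (hs : s.Nodup) :
    List.Sublist s (List.finRange k) ↔ s.Pairwise (· < ·) := by
  constructor
  · intro h
    exact List.Pairwise.sublist h (List.pairwise_lt_finRange k)
  · intro h
    have hsub : s ⊆ List.finRange k := fun x _ => List.mem_finRange x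
    obtain ⟨l, hperm, hsubl⟩ := List.subperm_of_subset hs hsub
    haveI : IsAntisymm (Fin k) (· < ·) := ⟨fun a b h1 h2 => absurd h2 (lt_asymm h1)⟩
    have hlsort : l.Pairwise (· < ·) := List.Pairwise.sublist hsubl (List.pairwise_lt_finRange k)
    rwa [List.Perm.eq_of_pairwise' hlsort h hperm] at hsubl

lemma Yuniv_coeff (s : List (Fin k)) (hs : s.Nodup) :
    Yuniv K k s = if s.Pairwise (· < ·) then 1 else 0 := by
  rw [Yuniv, List.ofFn_eq_map, prodList_exp _ (List.nodup_finRange k) s hs]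
  by_cases h : List.Sublist s (List.finRange k)
  · rw [if_pos h, if_pos ((sublist_finRange_iff s hs).mp h)]
  · rw [if_neg h, if_neg (fun hh => h ((sublist_finRange_iff s hs).mpr hh))]

variable {K : Type} [Field K] [CharZero K] {n k : ℕ}

/-- Number of ways to cut `v` into `j` nonempty strictly increasing segments. -/
def Acount : ℕ → List (Fin n) → ℕ
  | 0, v => if v = [] then 1 else 0
  | j+1, v => ∑ i ∈ Finset.Icc 1 v.length,
      (if (v.take i).Pairwise (· < ·) then Acount j (v.drop i) else 0)

lemma powF_Yuniv :
    ∀ (j : ℕ) (u : List (Fin k)), u.Nodup →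
      powF (Yuniv K k - oneF) j u = ((Acount j u : ℕ) : K) := by
  intro j
  induction j with
  | zero =>
      intro u _
      show oneF u = _
      cases u with
      | nil => simp [oneF, Acount]
      | cons a u' => simp [oneF, Acount]
  | succ j ih =>
      intro u hu
      rw [powF_succ, mulF, range_succ_eq_insert u.length, Finset.sum_insert (by simp)]
      have h0 : (Yuniv K k - oneF : Fhat K k) (u.take 0) = 0 := by
        show Yuniv K k [] - oneF [] = 0
        rw [Yuniv_coeff [] List.nodup_nil, if_pos List.Pairwise.nil]
        simp [oneF]
      rw [h0, zero_mul, zero_add]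
      have hterm : ∀ i ∈ Finset.Icc 1 u.length,
          (Yuniv K k - oneF : Fhat K k) (u.take i) * powF (Yuniv K k - oneF) j (u.drop i)
            = ((if (u.take i).Pairwise (· < ·) then Acount j (u.drop i) else 0 : ℕ) : K) := by
        intro i hi
        obtain ⟨hi1, him⟩ := Finset.mem_Icc.mp hi
        have htake : u.take i ≠ [] := by
          intro h
          have hlen := congrArg List.length h
          rw [List.length_take] at hlen
          simp only [List.length_nil] at hlen
          omega
        have hY : (Yuniv K k - oneF : Fhat K k) (u.take i) = Yuniv K k (u.take i) := by
          show Yuniv K k (u.take i) - oneF (u.take i) = _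
          rw [show oneF (u.take i) = (0:K) from if_neg htake, sub_zero]
        rw [hY, Yuniv_coeff (u.take i) (hu.sublist (List.take_sublist i u)),
          ih (u.drop i) (hu.sublist (List.drop_sublist i u))]
        by_cases hsort : (u.take i).Pairwise (· < ·)
        · rw [if_pos hsort, if_pos hsort, one_mul]
        · rw [if_neg hsort, if_neg hsort, zero_mul, Nat.cast_zero]
      rw [Finset.sum_congr rfl hterm]
      show _ = ((Acount (j+1) u : ℕ) : K)
      rw [show Acount (j+1) u = ∑ i ∈ Finset.Icc 1 u.length,
        (if (u.take i).Pairwise (· < ·) then Acount j (u.drop i) else 0) from rfl]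
      rw [Nat.cast_sum]

lemma ite10_congr {P Q : Prop} [Decidable P] [Decidable Q] (h : P ↔ Q) :
    (if P then (1:ℕ) else 0) = if Q then 1 else 0 := by
  by_cases hp : P
  · rw [if_pos hp, if_pos (h.mp hp)]
  · rw [if_neg hp, if_neg (fun q => hp (h.mpr q))]

section ShufSorted

variable {x : Fin n} {t : List (Fin n)}

lemma head_eq_x_of (hx : ∀ y ∈ t, x < y) {c : Fin n} {l : List (Fin n)}
    (h1 : (c :: l).Pairwise (· < ·)) (hcm : c ∈ (↑(x :: t) : Multiset (Fin n)))
    (hxm : x ∈ c :: l) : c = x := by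
  by_contra hcx
  have hxl : x ∈ l := by
    rcases List.mem_cons.mp hxm with h | h
    · exact absurd h.symm hcx
    · exact h
  have hclt : c < x := List.rel_of_pairwise_cons h1 hxl
  rcases List.mem_cons.mp (Multiset.mem_coe.mp hcm) with h | h
  · exact hcx h
  · exact absurd hclt (lt_asymm (hx c h))

lemma cond_cons_left (hx : ∀ y ∈ t, x < y) (a b : List (Fin n)) :
    ((x :: a).Pairwise (· < ·) ∧ b.Pairwise (· < ·)
        ∧ (↑(x :: a) + ↑b : Multiset (Fin n)) = ↑(x :: t))
      ↔ (a.Pairwise (· < ·) ∧ b.Pairwise (· < ·) ∧ (↑a + ↑b : Multiset (Fin n)) = ↑t) := by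
  constructor
  · rintro ⟨h1, h2, h3⟩
    refine ⟨h1.of_cons, h2, ?_⟩
    have hkey : x ::ₘ (↑a + ↑b) = x ::ₘ (↑t : Multiset (Fin n)) := by
      calc x ::ₘ ((↑a : Multiset (Fin n)) + ↑b) = ↑(x :: a) + ↑b := by
            rw [← Multiset.cons_add, Multiset.cons_coe]
        _ = ↑(x :: t) := h3
        _ = x ::ₘ (↑t : Multiset (Fin n)) := (Multiset.cons_coe x t).symm
    exact (Multiset.cons_inj_right x).mp hkey
  · rintro ⟨h1, h2, h3⟩
    refine ⟨?_, h2, ?_⟩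
    · rw [List.pairwise_cons]
      refine ⟨fun y hy => hx y ?_, h1⟩
      have : y ∈ (↑t : Multiset (Fin n)) := by
        rw [← h3]
        exact Multiset.mem_add.mpr (Or.inl (Multiset.mem_coe.mpr hy))
      exact Multiset.mem_coe.mp this
    · calc (↑(x :: a) : Multiset (Fin n)) + ↑b = x ::ₘ (↑a + ↑b) := by
            rw [← Multiset.cons_coe, Multiset.cons_add]
        _ = x ::ₘ (↑t : Multiset (Fin n)) := by rw [h3]
        _ = ↑(x :: t) := Multiset.cons_coe x t

lemma cond_cons_right (hx : ∀ y ∈ t, x < y) (a b : List (Fin n)) :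
    (a.Pairwise (· < ·) ∧ (x :: b).Pairwise (· < ·)
        ∧ (↑a + ↑(x :: b) : Multiset (Fin n)) = ↑(x :: t))
      ↔ (a.Pairwise (· < ·) ∧ b.Pairwise (· < ·) ∧ (↑a + ↑b : Multiset (Fin n)) = ↑t) := by
  constructor
  · rintro ⟨h1, h2, h3⟩
    refine ⟨h1, h2.of_cons, ?_⟩
    have hkey : x ::ₘ (↑a + ↑b) = x ::ₘ (↑t : Multiset (Fin n)) := by
      calc x ::ₘ ((↑a : Multiset (Fin n)) + ↑b) = ↑a + ↑(x :: b) := by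
            rw [← Multiset.cons_coe, Multiset.add_cons]
        _ = ↑(x :: t) := h3
        _ = x ::ₘ (↑t : Multiset (Fin n)) := (Multiset.cons_coe x t).symm
    exact (Multiset.cons_inj_right x).mp hkey
  · rintro ⟨h1, h2, h3⟩
    refine ⟨h1, ?_, ?_⟩
    · rw [List.pairwise_cons]
      refine ⟨fun y hy => hx y ?_, h2⟩
      have : y ∈ (↑t : Multiset (Fin n)) := by
        rw [← h3]
        exact Multiset.mem_add.mpr (Or.inr (Multiset.mem_coe.mpr hy))
      exact Multiset.mem_coe.mp this
    · calc (↑a : Multiset (Fin n)) + ↑(x :: b) = x ::ₘ (↑a + ↑b) := by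
            rw [← Multiset.cons_coe, Multiset.add_cons]
        _ = x ::ₘ (↑t : Multiset (Fin n)) := by rw [h3]
        _ = ↑(x :: t) := Multiset.cons_coe x t

end ShufSorted

lemma shuf_sorted :
    ∀ (t : List (Fin n)), t.Pairwise (· < ·) → ∀ (a b : List (Fin n)),
      shuf t a b = if (a.Pairwise (· < ·) ∧ b.Pairwise (· < ·)
          ∧ (↑a + ↑b : Multiset (Fin n)) = ↑t) then 1 else 0 := by
  intro t
  induction t with
  | nil =>
      intro _ a b
      rw [shuf_nil]
      refine ite10_congr ?_
      constructor
      · rintro ⟨rfl, rfl⟩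
        exact ⟨List.Pairwise.nil, List.Pairwise.nil, by simp⟩
      · rintro ⟨-, -, h3⟩
        have hc := congrArg Multiset.card h3
        rw [Multiset.card_add] at hc
        simp only [Multiset.coe_card, List.length_nil] at hc
        constructor
        · exact List.eq_nil_of_length_eq_zero (by omega)
        · exact List.eq_nil_of_length_eq_zero (by omega)
  | cons x t ih =>
      intro hsort a b
      have ht : t.Pairwise (· < ·) := hsort.of_cons
      have hx : ∀ y ∈ t, x < y := fun y hy => List.rel_of_pairwise_cons hsort hy
      have hxt : x ∉ t := fun h => lt_irrefl x (hx x h)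
      have hxmem : x ∈ (↑(x :: t) : Multiset (Fin n)) :=
        Multiset.mem_coe.mpr (List.mem_cons_self)
      cases a with
      | nil =>
          cases b with
          | nil =>
              rw [shuf_cons_nil_nil]
              symm
              rw [if_neg]
              rintro ⟨-, -, h3⟩
              have hc := congrArg Multiset.card h3
              rw [Multiset.card_add] at hc
              simp only [Multiset.coe_card, List.length_nil, List.length_cons] at hc
              omega
          | cons d b' =>
              rw [shuf_cons_nil_cons]
              by_cases hdx : x = d
              · subst hdx
                rw [if_pos rfl, ih ht [] b']
                exact ite10_congr (cond_cons_right hx [] b').symm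
              · rw [if_neg (fun h => hdx h.symm)]
                symm
                rw [if_neg]
                rintro ⟨-, h2, h3⟩
                refine hdx ?_
                refine Eq.symm ?_
                refine head_eq_x_of hx h2 ?_ ?_
                · rw [← h3]
                  exact Multiset.mem_add.mpr (Or.inr (Multiset.mem_coe.mpr (List.mem_cons_self)))
                · have : x ∈ (↑([] : List (Fin n)) + ↑(d :: b') : Multiset (Fin n)) := by
                    rw [h3]; exact hxmem
                  rcases Multiset.mem_add.mp this with h | h
                  · simp at h
                  · exact Multiset.mem_coe.mp h
      | cons c a' =>
          cases b with
          | nil =>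
              rw [shuf_cons_cons_nil]
              by_cases hcx : x = c
              · subst hcx
                rw [if_pos rfl, ih ht a' []]
                exact ite10_congr (cond_cons_left hx a' []).symm
              · rw [if_neg (fun h => hcx h.symm)]
                symm
                rw [if_neg]
                rintro ⟨h1, -, h3⟩
                refine hcx ?_
                refine Eq.symm ?_
                refine head_eq_x_of hx h1 ?_ ?_
                · rw [← h3]
                  exact Multiset.mem_add.mpr (Or.inl (Multiset.mem_coe.mpr (List.mem_cons_self)))
                · have : x ∈ (↑(c :: a') + ↑([] : List (Fin n)) : Multiset (Fin n)) := by
                    rw [h3]; exact hxmem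
                  rcases Multiset.mem_add.mp this with h | h
                  · exact Multiset.mem_coe.mp h
                  · simp at h
          | cons d b' =>
              rw [shuf_cons_cons_cons]
              by_cases hcx : x = c <;> by_cases hdx : x = d
              · -- both heads equal x : everything vanishes
                subst hcx; subst hdx
                rw [if_pos rfl, if_pos rfl, ih ht a' (x :: b'), ih ht (x :: a') b']
                rw [if_neg, if_neg, if_neg]
                · rintro ⟨h1, h2, h3⟩
                  have hkey : x ::ₘ ((↑a' : Multiset (Fin n)) + ↑(x :: b')) = x ::ₘ ↑t := by
                    calc x ::ₘ ((↑a' : Multiset (Fin n)) + ↑(x :: b'))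
                        = ↑(x :: a') + ↑(x :: b') := by rw [← Multiset.cons_add, Multiset.cons_coe]
                      _ = ↑(x :: t) := h3
                      _ = x ::ₘ (↑t : Multiset (Fin n)) := (Multiset.cons_coe x t).symm
                  have h4 := (Multiset.cons_inj_right x).mp hkey
                  apply hxt
                  have : x ∈ (↑t : Multiset (Fin n)) := by
                    rw [← h4]
                    exact Multiset.mem_add.mpr (Or.inr (Multiset.mem_coe.mpr (List.mem_cons_self)))
                  exact Multiset.mem_coe.mp this
                · rintro ⟨h1, h2, h3⟩
                  apply hxt
                  have : x ∈ (↑t : Multiset (Fin n)) := by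
                    rw [← h3]
                    exact Multiset.mem_add.mpr (Or.inl (Multiset.mem_coe.mpr (List.mem_cons_self)))
                  exact Multiset.mem_coe.mp this
                · rintro ⟨h1, h2, h3⟩
                  apply hxt
                  have : x ∈ (↑t : Multiset (Fin n)) := by
                    rw [← h3]
                    exact Multiset.mem_add.mpr (Or.inr (Multiset.mem_coe.mpr (List.mem_cons_self)))
                  exact Multiset.mem_coe.mp this
              · -- c = x, d ≠ x
                subst hcx
                rw [if_pos rfl, if_neg (fun h => hdx h.symm), ih ht a' (d :: b'), add_zero]
                exact ite10_congr (cond_cons_left hx a' (d :: b')).symm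
              · -- c ≠ x, d = x
                subst hdx
                rw [if_neg (fun h => hcx h.symm), if_pos rfl, ih ht (c :: a') b', zero_add]
                exact ite10_congr (cond_cons_right hx (c :: a') b').symm
              · rw [if_neg (fun h => hcx h.symm), if_neg (fun h => hdx h.symm)]
                symm
                rw [if_neg]
                rintro ⟨h1, h2, h3⟩
                have : x ∈ (↑(c :: a') + ↑(d :: b') : Multiset (Fin n)) := by
                  rw [h3]; exact hxmem
                rcases Multiset.mem_add.mp this with h | h
                · refine hcx (head_eq_x_of hx h1 ?_ (Multiset.mem_coe.mp h)).symm
                  rw [← h3]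
                  exact Multiset.mem_add.mpr (Or.inl (Multiset.mem_coe.mpr (List.mem_cons_self)))
                · refine hdx (head_eq_x_of hx h2 ?_ (Multiset.mem_coe.mp h)).symm
                  rw [← h3]
                  exact Multiset.mem_add.mpr (Or.inr (Multiset.mem_coe.mpr (List.mem_cons_self)))

variable {n k : ℕ}

lemma coe_take_add_drop (u : List (Fin n)) (i : ℕ) :
    ((↑(u.take i) + ↑(u.drop i) : Multiset (Fin n))) = ↑u := by
  show ((↑(u.take i ++ u.drop i) : Multiset (Fin n))) = ↑u
  rw [List.take_append_drop]

lemma Scount_sorted :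
    ∀ (j : ℕ) (t u : List (Fin n)), t.Pairwise (· < ·) →
      Scount j t u = if (↑u : Multiset (Fin n)) = ↑t then Acount j u else 0 := by
  haveI : IsAntisymm (Fin n) (· < ·) := ⟨fun a b h1 h2 => absurd h2 (lt_asymm h1)⟩
  intro j
  induction j with
  | zero =>
      intro t u _
      show (if t = [] ∧ u = [] then 1 else 0) = _
      by_cases h : (↑u : Multiset (Fin n)) = ↑t
      · rw [if_pos h]
        by_cases hu : u = []
        · subst hu
          have ht : t = [] := by
            rw [show ((↑([] : List (Fin n)) : Multiset (Fin n))) = 0 from rfl] at h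
            exact (Multiset.coe_eq_zero t).mp h.symm
          rw [if_pos ⟨ht, rfl⟩]
          show _ = Acount 0 ([] : List (Fin n))
          rw [show Acount 0 ([] : List (Fin n)) = 1 from rfl]
        · rw [if_neg (fun hh => hu hh.2)]
          show _ = Acount 0 u
          rw [show Acount 0 u = if u = [] then 1 else 0 from rfl, if_neg hu]
      · rw [if_neg h, if_neg]
        rintro ⟨rfl, rfl⟩
        exact h rfl
  | succ j ih =>
      intro t u hsort
      have htnodup : t.Nodup := hsort.imp (fun h => ne_of_lt h)
      have hinner : ∀ i ∈ Finset.Icc 1 u.length,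
          wsum (u.length - i) (fun q2 => shuf t (u.take i) q2 * Scount j q2 (u.drop i))
            = if ((u.take i).Pairwise (· < ·) ∧ (↑u : Multiset (Fin n)) = ↑t) then
                Acount j (u.drop i) else 0 := by
        intro i _
        by_cases hcase : (u.take i).Pairwise (· < ·) ∧ (↑u : Multiset (Fin n)) = ↑t
        · obtain ⟨htake, hut⟩ := hcase
          have hunodup : u.Nodup := by
            have := Multiset.coe_nodup.mpr htnodup
            rw [← hut] at this
            exact Multiset.coe_nodup.mp this
          have hdnodup : (u.drop i).Nodup := hunodup.sublist (List.drop_sublist i u)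
          set L : List (Fin n) := (List.finRange n).filter (fun y => y ∈ u.drop i) with hL
          have hLsub : List.Sublist L (List.finRange n) := List.filter_sublist
          have hLsort : L.Pairwise (· < ·) :=
            List.Pairwise.sublist hLsub (List.pairwise_lt_finRange n)
          have hLnodup : L.Nodup := (List.nodup_finRange n).sublist hLsub
          have hLmset : (↑L : Multiset (Fin n)) = ↑(u.drop i) := by
            rw [Multiset.Nodup.ext (Multiset.coe_nodup.mpr hLnodup) (Multiset.coe_nodup.mpr hdnodup)]
            intro a
            simp only [Multiset.mem_coe, hL, List.mem_filter, List.mem_finRange, true_and,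
              decide_eq_true_eq]
          have hLlen : L.length = u.length - i := by
            have := congrArg Multiset.card hLmset
            simpa using this
          rw [if_pos ⟨htake, hut⟩]
          have hpoint : ∀ q2 : List (Fin n), q2.length = u.length - i →
              shuf t (u.take i) q2 * Scount j q2 (u.drop i)
                = if q2 = L then Acount j (u.drop i) else 0 := by
            intro q2 _
            by_cases hq2L : q2 = L
            · subst hq2L
              rw [if_pos rfl]
              rw [shuf_sorted t hsort, if_pos ⟨htake, hLsort, by rw [hLmset, coe_take_add_drop, hut]⟩,
                one_mul, ih L (u.drop i) hLsort, if_pos hLmset.symm]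
            · rw [if_neg hq2L]
              rw [shuf_sorted t hsort]
              by_cases hc3 : (u.take i).Pairwise (· < ·) ∧ q2.Pairwise (· < ·)
                  ∧ (↑(u.take i) + ↑q2 : Multiset (Fin n)) = ↑t
              · rw [if_pos hc3, one_mul, ih q2 (u.drop i) hc3.2.1]
                rw [if_neg]
                intro hdq
                apply hq2L
                refine List.Perm.eq_of_pairwise' hc3.2.1 hLsort (Multiset.coe_eq_coe.mp ?_)
                rw [← hdq, hLmset]
              · rw [if_neg hc3, zero_mul]
          rw [wsum_congr _ hpoint, wsum_collapse, if_pos hLlen]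
        · rw [if_neg hcase]
          refine wsum_eq_zero fun q2 _ => ?_
          rw [shuf_sorted t hsort]
          by_cases hc3 : (u.take i).Pairwise (· < ·) ∧ q2.Pairwise (· < ·)
              ∧ (↑(u.take i) + ↑q2 : Multiset (Fin n)) = ↑t
          · rw [if_pos hc3, one_mul, ih q2 (u.drop i) hc3.2.1]
            rw [if_neg]
            intro hdq
            apply hcase
            refine ⟨hc3.1, ?_⟩
            rw [← coe_take_add_drop u i, hdq, hc3.2.2]
          · rw [if_neg hc3, zero_mul]
      show (∑ i ∈ Finset.Icc 1 u.length, _) = _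
      rw [Finset.sum_congr rfl hinner]
      by_cases hut : (↑u : Multiset (Fin n)) = ↑t
      · rw [if_pos hut]
        show _ = Acount (j+1) u
        rw [show Acount (j+1) u = ∑ i ∈ Finset.Icc 1 u.length,
          (if (u.take i).Pairwise (· < ·) then Acount j (u.drop i) else 0) from rfl]
        refine Finset.sum_congr rfl fun i _ => ?_
        by_cases hs : (u.take i).Pairwise (· < ·)
        · rw [if_pos ⟨hs, hut⟩, if_pos hs]
        · rw [if_neg (fun hh => hs hh.1), if_neg hs]
      · rw [if_neg hut]
        exact Finset.sum_eq_zero fun i _ => if_neg (fun hh => hut hh.2)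

variable {K : Type} [Field K] [CharZero K] {n : ℕ}

lemma mset_eq_finRange_of_nodup {k : ℕ} {u : List (Fin k)} (hlen : u.length = k)
    (hnodup : u.Nodup) : (↑u : Multiset (Fin k)) = ↑(List.finRange k) := by
  have hsub : List.finRange k ⊆ u := by
    intro x _
    have hcard : u.toFinset.card = k := by
      rw [List.toFinset_card_of_nodup hnodup, hlen]
    have huniv : u.toFinset = Finset.univ :=
      Finset.eq_univ_of_card _ (by rw [hcard, Fintype.card_fin])
    rw [← List.mem_toFinset, huniv]
    exact Finset.mem_univ x
  have hsubperm := List.subperm_of_subset (List.nodup_finRange k) hsub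
  have hperm := hsubperm.perm_of_length_le (by rw [hlen, List.length_finRange])
  exact (Multiset.coe_eq_coe.mpr hperm).symm

lemma CBHuniv_eq (k : ℕ) (u : List (Fin k)) :
    CBHuniv K k u = Ecoef (List.finRange k) u := by
  have hsortR : (List.finRange k).Pairwise (· < ·) := List.pairwise_lt_finRange k
  by_cases h : u.length = k ∧ u.Nodup
  · have hmset := mset_eq_finRange_of_nodup h.1 h.2
    rw [show CBHuniv K k u = logF (Yuniv K k) u from if_pos h]
    show (∑ j ∈ Finset.Icc 1 u.length, _) = _
    rw [Ecoef]
    refine Finset.sum_congr rfl fun j _ => ?_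
    rw [powF_Yuniv j u h.2, Scount_sorted j (List.finRange k) u hsortR, if_pos hmset]
  · rw [show CBHuniv K k u = 0 from if_neg h]
    rw [Ecoef]
    symm
    refine Finset.sum_eq_zero fun j _ => ?_
    rw [Scount_sorted j (List.finRange k) u hsortR, if_neg, Nat.cast_zero, mul_zero]
    intro hmset
    apply h
    constructor
    · have := congrArg Multiset.card hmset
      simpa using this
    · have := Multiset.coe_nodup.mpr (List.nodup_finRange k)
      rw [← hmset] at this
      exact Multiset.coe_nodup.mp this

lemma CBHword_eq (w v : List (Fin n)) (hwv : w.length = v.length) :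
    CBHword (K := K) w v = Ecoef w v := by
  show wsum v.length (fun u => if u.map w.get = v then CBHuniv K w.length u else 0) = _
  have h1 : ∀ u : List (Fin w.length), u.length = v.length →
      (if u.map w.get = v then CBHuniv K w.length u else 0)
        = ∑ j ∈ Finset.Icc 1 v.length, (-1 : K) ^ (j + 1) * (j : K)⁻¹ *
            (if u.map w.get = v then ((Scount j (List.finRange w.length) u : ℕ) : K) else 0) := by
    intro u hu
    by_cases hmap : u.map w.get = v
    · rw [if_pos hmap, CBHuniv_eq w.length u, Ecoef, hu]
      exact Finset.sum_congr rfl fun j _ => by rw [if_pos hmap]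
    · rw [if_neg hmap]
      symm
      exact Finset.sum_eq_zero fun j _ => by rw [if_neg hmap, mul_zero]
  rw [wsum_congr _ h1, wsum_sum, Ecoef]
  refine Finset.sum_congr rfl fun j _ => ?_
  have h2 : ∀ u : List (Fin w.length), u.length = v.length →
      ((-1 : K) ^ (j + 1) * (j : K)⁻¹ *
          (if u.map w.get = v then ((Scount j (List.finRange w.length) u : ℕ) : K) else 0))
        = (-1 : K) ^ (j + 1) * (j : K)⁻¹ *
            (if u.map w.get = v then ((Scount j (List.finRange w.length) u : ℕ) : K) else 0) :=
    fun _ _ => rfl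
  have hcast : wsum v.length (fun u => (-1 : K) ^ (j + 1) * (j : K)⁻¹ *
        (if u.map w.get = v then ((Scount j (List.finRange w.length) u : ℕ) : K) else 0))
      = (-1 : K) ^ (j + 1) * (j : K)⁻¹ *
          ((pushN w.get (Scount j (List.finRange w.length)) v : ℕ) : K) := by
    rw [wsum_mul_left]
    congr 1
    rw [pushN, wsum_natCast]
    refine wsum_congr _ fun u _ => ?_
    by_cases hmap : u.map w.get = v
    · rw [if_pos hmap, if_pos hmap]
    · rw [if_neg hmap, if_neg hmap, Nat.cast_zero]
  rw [hcast, ← Scount_push w.get j (List.finRange w.length) v, List.map_get_finRange w]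

theorem log_grouplike_eq_cbhHat' (X : Fhat K n) (hX : IsGroupLike X) :
    logF X = cbhHat X := by
  funext v
  rw [logF_grouplike X hX v]
  show _ = wsum v.length (fun w => X w * CBHword w v)
  refine wsum_congr _ fun w hw => ?_
  rw [CBHword_eq w v hw]

end CBHPaper


namespace CBHPaper

/-- **Proposition 1.**  If `X ∈ F̂ₙ` is group-like (for the completed coproduct
making the generators primitive), then `log X = ĉbhₙ(X)`, where `ĉbhₙ` is the
completion of the linear map `cbhₙ : Fₙ → fₙ` with `cbhₙ(1) = 0` and
`cbhₙ(x_{i₁} ⋯ x_{i_k}) = CBHₖ(x_{i₁}, …, x_{i_k})`. -/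
theorem log_grouplike_eq_cbhHat {K : Type} [Field K] [CharZero K] {n : ℕ}
    (X : Fhat K n) (hX : IsGroupLike X) :
    logF X = cbhHat X :=
  log_grouplike_eq_cbhHat' X hX

end CBHPaper
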